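/- Let T be an abelian regular subgroup of Aff(V), and define the product x·y = x·δ(y) on V and the circle operation x∘y = x + y + x·y. Then (V, ∘) is an abelian group and the map x ↦ τ(x) is a group isomorphism from (V, ∘) onto T. In particular, (V, +, ·) is a (Jacobson) radical ring. -/
import Mathlib


theorem stmt {F V : Type*} [Field F] [AddCommGroup V] [Module F V]
    (T : Subgroup (V ≃ᵃ[F] V))
    (hcomm : ∀ g ∈ T, ∀ h ∈ T, g * h = h * g)
    (hreg : ∀ v : V, ∃! g : V ≃ᵃ[F] V, g ∈ T ∧ g 0 = v)
    (τ : V → (V ≃ᵃ[F] V)) (hτT : ∀ x, τ x ∈ T) (hτ0 : ∀ x, τ x 0 = x)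
    (δ : V → Module.End F V)
    (hδ : ∀ x z, τ x z = z + δ x z + x) :
    ∀ circ : V → V → V, (∀ x y, circ x y = x + y + δ y x) →
      (∀ x y, circ x y = circ y x) ∧
      (∀ x y z, circ (circ x y) z = circ x (circ y z)) ∧
      (∀ x, circ x 0 = x) ∧
      (∀ x, ∃ y, circ x y = 0) ∧
      (∀ x y, τ x * τ y = τ (circ x y)) ∧
      Function.Injective τ ∧
      (∀ g, g ∈ T ↔ ∃ x, g = τ x) := by
  intro circ hcirc
  have hτinj : Function.Injective τ := fun a b h => by rw [← hτ0 a, ← hτ0 b, h]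
  have hmul : ∀ x y, τ x * τ y = τ (circ x y) := by
    intro x y
    have h1 : (τ x * τ y) ∈ T ∧ (τ x * τ y) 0 = circ x y := by
      constructor
      · exact mul_mem (hτT x) (hτT y)
      · rw [hcomm _ (hτT x) _ (hτT y)]
        show τ y (τ x 0) = circ x y
        rw [hτ0, hδ, hcirc]
        abel
    have h2 : τ (circ x y) ∈ T ∧ τ (circ x y) 0 = circ x y := ⟨hτT _, hτ0 _⟩
    exact (hreg (circ x y)).unique h1 h2
  have h1T : (1 : V ≃ᵃ[F] V) 0 = 0 := rfl
  have hτ00 : τ 0 = 1 := (hreg 0).unique ⟨hτT 0, hτ0 0⟩ ⟨one_mem T, h1T⟩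
  have hc : ∀ x y, circ x y = circ y x := by
    intro x y
    apply hτinj
    rw [← hmul, ← hmul, hcomm _ (hτT x) _ (hτT y)]
  refine ⟨hc, ?_, ?_, ?_, hmul, hτinj, ?_⟩
  · intro x y z
    apply hτinj
    rw [← hmul, ← hmul, ← hmul, ← hmul, mul_assoc]
  · intro x
    apply hτinj
    rw [← hmul, hτ00, mul_one]
  · intro x
    refine ⟨(τ x)⁻¹ 0, ?_⟩
    have hy : τ ((τ x)⁻¹ 0) = (τ x)⁻¹ :=
      (hreg ((τ x)⁻¹ 0)).unique ⟨hτT _, hτ0 _⟩ ⟨inv_mem (hτT x), rfl⟩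
    apply hτinj
    rw [← hmul, hy, mul_inv_cancel, hτ00]
  · intro g
    constructor
    · intro hg
      exact ⟨g 0, ((hreg (g 0)).unique ⟨hg, rfl⟩ ⟨hτT _, hτ0 _⟩)⟩
    · rintro ⟨x, rfl⟩; exact hτT x
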